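/- arXiv:2106.11194 — 2 statements merged into one kernel-verified Lean document; each statement's English description precedes it below -/
import Mathlib

section
/- (Step 3 in the proof of Theorem 3.1.) Let p > δ > 0, a > 0, K := (1/a) log(p/δ), and f(x) := (p/δ) e^{−ax}. If ζ > 0 and (e^{δζ} − 1)·log(p/δ) ≤ 1, then f(x) < 1/(1 − e^{−δζ}) for every x ≥ θ, where θ := K e^{−δζ}. -/
/-! Write `L = log (p/δ)` and `u = e^{-δζ} ∈ (0, 1)`, so that `f x = e^{L - a x}` and `θ = L u / a`.
For `x ≥ θ` this gives `f x ≤ e^{L (1 - u)}`, and the hypothesis on `ζ`, multiplied by `u`, reads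
`L (1 - u) ≤ u`. Hence `f x ≤ e^u < 1/(1 - u)`. -/

open Real

lemma mul_one_sub_exp_neg_le_exp_neg {c L : ℝ} (h : (exp c - 1) * L ≤ 1) :
    L * (1 - exp (-c)) ≤ exp (-c) := by
  have hc : exp c * exp (-c) = 1 := by rw [← exp_add, add_neg_cancel, exp_zero]
  calc L * (1 - exp (-c)) = (exp c - 1) * L * exp (-c) := by linear_combination -L * hc
    _ ≤ 1 * exp (-c) := by gcongr
    _ = exp (-c) := one_mul _

lemma mul_exp_neg_mul_le_exp_log_sub {q a t x : ℝ} (hq : 0 < q) (ha : 0 < a) (hx : t / a ≤ x) :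
    q * exp (-a * x) ≤ exp (log q - t) := by
  rw [sub_eq_add_neg, exp_add, exp_log hq]
  gcongr
  rw [div_le_iff₀' ha] at hx
  linarith

theorem nicholson_one_pair_f_bound
    (p a δ : ℝ) (hδ : 0 < δ) (hpδ : δ < p) (ha : 0 < a)
    (K : ℝ) (hKdef : K = (1 / a) * Real.log (p / δ))
    (f : ℝ → ℝ) (hf : f = fun x => (p / δ) * Real.exp (-a * x))
    (ζ : ℝ) (hζ : 0 < ζ)
    (hcond : (Real.exp (δ * ζ) - 1) * Real.log (p / δ) ≤ 1)
    (θ : ℝ) (hθ : θ = K * Real.exp (-(δ * ζ))) :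
    ∀ x : ℝ, θ ≤ x → f x < 1 / (1 - Real.exp (-(δ * ζ))) := by
  intro x hx
  subst hf hKdef hθ
  set L := log (p / δ)
  set u := exp (-(δ * ζ))
  have hu_pos : 0 < u := exp_pos _
  have hu_lt_one : u < 1 := exp_lt_one_iff.mpr (neg_neg_of_pos (mul_pos hδ hζ))
  have hθx : L * u / a ≤ x := by rwa [mul_div_right_comm, div_eq_inv_mul, ← one_div]
  calc p / δ * exp (-a * x) ≤ exp (L - L * u) :=
        mul_exp_neg_mul_le_exp_log_sub (div_pos (hδ.trans hpδ) hδ) ha hθx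
    _ = exp (L * (1 - u)) := by rw [mul_one_sub]
    _ ≤ exp u := exp_le_exp.mpr (mul_one_sub_exp_neg_le_exp_neg hcond)
    _ < 1 / (1 - u) := exp_bound_div_one_sub_of_interval' hu_pos hu_lt_one
end

section
/- (Step 4 in the proof of Theorem 3.1: monotonicity of j in ζ.) Let p > δ > 0, a > 0, K := (1/a) log(p/δ), f(x) := (p/δ) e^{−ax}, and for ζ > 0 and x > 0 with (1 − e^{−δζ}) f(x) < 1 define j(x, ζ) := (1 − μ)/(1 − μ f(x)) where μ := 1 − e^{−δζ}. Then (x − K) · ∂j/∂ζ(x, ζ) < 0 for every such x ≠ K; consequently ζ ↦ j(x, ζ) is strictly increasing when 0 < x < K and strictly decreasing when x > K (on the domain where (1 − e^{−δζ}) f(x) < 1). -/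
/-!
With `μ = 1 - e^{-δζ}` and `c = f x`, one computes
`∂j/∂ζ = (c - 1) · δ e^{-δζ} / (1 - μ c)²`, so on the domain `μ c < 1` the derivative has the sign
of `f x - 1`. Since `f` is strictly decreasing with `f K = 1`, that sign is the sign of `K - x`,
and the mean value theorem on the (convex, open) domain turns the sign into strict monotonicity.
-/

open Real Set

/-- The paper's `j(x, ζ)` as a function of `ζ`, with `c` standing for `f x`. -/
noncomputable def nicholsonJ (δ c ζ : ℝ) : ℝ :=
  exp (-(δ * ζ)) / (1 - (1 - exp (-(δ * ζ))) * c)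

def nicholsonJDomain (δ c : ℝ) : Set ℝ :=
  {ζ | 0 < ζ ∧ (1 - exp (-(δ * ζ))) * c < 1}

theorem hasDerivAt_nicholsonJ {δ c ζ : ℝ} (hζ : (1 - exp (-(δ * ζ))) * c ≠ 1) :
    HasDerivAt (nicholsonJ δ c)
      ((c - 1) * (δ * exp (-(δ * ζ)) / (1 - (1 - exp (-(δ * ζ))) * c) ^ 2)) ζ := by
  have hexp : HasDerivAt (fun z => exp (-(δ * z))) (exp (-(δ * ζ)) * -δ) ζ :=
    (((hasDerivAt_id ζ).const_mul δ).neg.congr_deriv (by ring)).exp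
  have hden := ((hexp.const_sub 1).mul_const c).const_sub 1
  exact (hexp.div hden (sub_ne_zero.mpr (Ne.symm hζ))).congr_deriv (by field_simp; ring)

theorem deriv_nicholsonJ_factor_pos {δ c ζ : ℝ} (hδ : 0 < δ)
    (hζ : (1 - exp (-(δ * ζ))) * c < 1) :
    0 < δ * exp (-(δ * ζ)) / (1 - (1 - exp (-(δ * ζ))) * c) ^ 2 := by
  have : 0 < 1 - (1 - exp (-(δ * ζ))) * c := sub_pos.mpr hζ
  positivity

theorem isOpen_nicholsonJDomain (δ c : ℝ) : IsOpen (nicholsonJDomain δ c) :=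
  isOpen_Ioi.inter <| isOpen_lt
    (by fun_prop : Continuous fun ζ => (1 - exp (-(δ * ζ))) * c) continuous_const

theorem convex_nicholsonJDomain {δ c : ℝ} (hδ : 0 ≤ δ) (hc : 0 ≤ c) :
    Convex ℝ (nicholsonJDomain δ c) := by
  refine (convex_iff_ordConnected).mpr ⟨fun z₁ h₁ z₂ h₂ z hz => ⟨h₁.1.trans_le hz.1, ?_⟩⟩
  refine lt_of_le_of_lt ?_ h₂.2
  gcongr
  exact hz.2

theorem continuousOn_nicholsonJ (δ c : ℝ) :
    ContinuousOn (nicholsonJ δ c) (nicholsonJDomain δ c) := fun _ hζ =>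
  (hasDerivAt_nicholsonJ hζ.2.ne).continuousAt.continuousWithinAt

theorem strictMonoOn_nicholsonJ {δ c : ℝ} (hδ : 0 < δ) (hc : 1 < c) :
    StrictMonoOn (nicholsonJ δ c) (nicholsonJDomain δ c) := by
  refine strictMonoOn_of_deriv_pos (convex_nicholsonJDomain hδ.le (by linarith))
    (continuousOn_nicholsonJ δ c) fun ζ hζ => ?_
  rw [(isOpen_nicholsonJDomain δ c).interior_eq] at hζ
  rw [(hasDerivAt_nicholsonJ hζ.2.ne).deriv]
  exact mul_pos (sub_pos.mpr hc) (deriv_nicholsonJ_factor_pos hδ hζ.2)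

theorem strictAntiOn_nicholsonJ {δ c : ℝ} (hδ : 0 < δ) (hc₀ : 0 ≤ c) (hc : c < 1) :
    StrictAntiOn (nicholsonJ δ c) (nicholsonJDomain δ c) := by
  refine strictAntiOn_of_deriv_neg (convex_nicholsonJDomain hδ.le hc₀)
    (continuousOn_nicholsonJ δ c) fun ζ hζ => ?_
  rw [(isOpen_nicholsonJDomain δ c).interior_eq] at hζ
  rw [(hasDerivAt_nicholsonJ hζ.2.ne).deriv]
  exact mul_neg_of_neg_of_pos (sub_neg.mpr hc) (deriv_nicholsonJ_factor_pos hδ hζ.2)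

theorem strictAnti_const_mul_exp_neg_mul {q a : ℝ} (hq : 0 < q) (ha : 0 < a) :
    StrictAnti fun x => q * exp (-a * x) := fun x y hxy => by
  simp only [neg_mul]
  gcongr

theorem const_mul_exp_neg_mul_log_div {q a : ℝ} (hq : 0 < q) (ha : a ≠ 0) :
    q * exp (-a * (1 / a * log q)) = 1 := by
  rw [show -a * (1 / a * log q) = -log q by field_simp, exp_neg, exp_log hq, mul_inv_cancel₀ hq.ne']

theorem StrictAnti.sub_mul_sub_neg {α : Type*} [Ring α] [LinearOrder α] [IsStrictOrderedRing α]
    {f : α → α} (hf : StrictAnti f) {x y : α}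
    (hxy : x ≠ y) : (x - y) * (f x - f y) < 0 := by
  rcases hxy.lt_or_gt with h | h
  · exact mul_neg_of_neg_of_pos (sub_neg.mpr h) (sub_pos.mpr (hf h))
  · exact mul_neg_of_pos_of_neg (sub_pos.mpr h) (sub_neg.mpr (hf h))

theorem nicholson_j_monotone_in_zeta
    (p a δ : ℝ) (hδ : 0 < δ) (hpδ : δ < p) (ha : 0 < a)
    (K : ℝ) (hKdef : K = (1 / a) * Real.log (p / δ))
    (f : ℝ → ℝ) (hf : f = fun x => (p / δ) * Real.exp (-a * x))
    (j : ℝ → ℝ → ℝ)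
    (hj : j = fun x ζ =>
      Real.exp (-(δ * ζ)) / (1 - (1 - Real.exp (-(δ * ζ))) * f x)) :
    (∀ x ζ : ℝ, 0 < x → 0 < ζ → (1 - Real.exp (-(δ * ζ))) * f x < 1 → x ≠ K →
      (x - K) * deriv (fun z => j x z) ζ < 0) ∧
    (∀ x : ℝ, 0 < x → x < K →
      StrictMonoOn (fun z => j x z)
        {ζ : ℝ | 0 < ζ ∧ (1 - Real.exp (-(δ * ζ))) * f x < 1}) ∧
    (∀ x : ℝ, K < x →
      StrictAntiOn (fun z => j x z)
        {ζ : ℝ | 0 < ζ ∧ (1 - Real.exp (-(δ * ζ))) * f x < 1}) := by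
  have hq : 0 < p / δ := div_pos (hδ.trans hpδ) hδ
  have hanti : StrictAnti f := hf ▸ strictAnti_const_mul_exp_neg_mul hq ha
  have hfK : f K = 1 := by rw [hf, hKdef]; exact const_mul_exp_neg_mul_log_div hq ha.ne'
  have hjx : ∀ x, (fun z => j x z) = nicholsonJ δ (f x) := fun x => by subst hj; rfl
  refine ⟨fun x ζ _ _ hζ hxK => ?_, fun x _ hxK => ?_, fun x hxK => ?_⟩
  · rw [hjx, (hasDerivAt_nicholsonJ hζ.ne).deriv, ← mul_assoc]
    have hsign := hanti.sub_mul_sub_neg hxK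
    rw [hfK] at hsign
    exact mul_neg_of_neg_of_pos hsign (deriv_nicholsonJ_factor_pos hδ hζ)
  · rw [hjx]
    exact strictMonoOn_nicholsonJ hδ (hfK ▸ hanti hxK)
  · rw [hjx]
    exact strictAntiOn_nicholsonJ hδ (hf ▸ (mul_pos hq (exp_pos _)).le) (hfK ▸ hanti hxK)
end
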